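/- For every asserted process {φ} p {ψ} of the Hoare logic for deACPei: {φ} p {ψ} is true in the sense of partial correctness if and only if the rely/guarantee asserted process ⟨False, True⟩ : {φ} p {ψ} is true in the sense of partial correctness. -/

import Mathlib

/-!
A formalization of the imperative process algebra deACPei from
"Rely/Guarantee Logic and Imperative Process Algebra".

Data is modelled semantically: data terms of sort `Data` are functions from
flexible-variable valuations to elements of the carrier `D` of sort `Data` of
the data algebra `𝔇`, and condition terms are functions from valuations to
propositions.  (This identifies data terms, respectively condition terms, that
are provably equal, respectively equivalent, in `𝔇`, exactly as the axioms
IMP1 and IMP2 of deACPei do.)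
-/

namespace DeACPei

open scoped Classical

variable {A V D : Type}

/-- flexible variable valuations -/
abbrev Val (V D : Type) : Type := V → D

/-- data terms of sort `Data` (modelled semantically) -/
abbrev Expr (V D : Type) : Type := (V → D) → D

/-- condition terms of sort `Cond` over current-value flexible variable
constants (modelled semantically) -/
abbrev Cond (V D : Type) : Type := (V → D) → Prop

/-- condition terms of sort `Cond` over current-value and previous-value
flexible variable constants; the first argument provides the current values,
the second the previous values -/
abbrev Cond2 (V D : Type) : Type := (V → D) → (V → D) → Prop

/-- the flexible variable valuation `ρ⟨d/v⟩` -/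
noncomputable def upd (ρ : Val V D) (v : V) (d : D) : Val V D :=
  fun w => if w = v then d else ρ w

/-- the data term denoting a fixed value `d` -/
def constE (d : D) : Expr V D := fun _ => d

/-- atomic process terms: basic actions, data-parameterized actions
`a(e₁,…,eₙ)` (with `n ≥ 1`), and assignment actions `v := e` -/
inductive Atom (A V D : Type) : Type where
  | basic : A → Atom A V D
  | param : A → Expr V D → List (Expr V D) → Atom A V D
  | assign : V → Expr V D → Atom A V D

/-- whether an atomic process term is an assignment action -/
def Atom.isAssign : Atom A V D → Prop
  | .assign _ _ => True
  | _ => False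

/-- evaluation of an atomic process term under a flexible variable valuation -/
def Atom.evalA (ρ : Val V D) : Atom A V D → Atom A V D
  | .basic a => .basic a
  | .param a e es => .param a (constE (e ρ)) (es.map fun f => constE (f ρ))
  | .assign v e => .assign v (constE (e ρ))

/-- closed process terms of deACPei -/
inductive P (A V D : Type) : Type where
  | atom : Atom A V D → P A V D
  | delta : P A V D
  | eps : P A V D
  | alt : P A V D → P A V D → P A V D
  | seq : P A V D → P A V D → P A V D
  | iter : P A V D → P A V D → P A V D
  | par : P A V D → P A V D → P A V D
  | lmerge : P A V D → P A V D → P A V D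
  | cmerge : P A V D → P A V D → P A V D
  | encap : Set A → P A V D → P A V D
  | gc : Cond V D → P A V D → P A V D
  | eval : Val V D → P A V D → P A V D

/-- the successful termination relation `t ↓ ρ` of the structural operational
semantics of deACPei -/
inductive Term : P A V D → Val V D → Prop where
  | eps : ∀ {ρ : Val V D}, Term .eps ρ
  | altL : ∀ {x y : P A V D} {ρ}, Term x ρ → Term (.alt x y) ρ
  | altR : ∀ {x y : P A V D} {ρ}, Term y ρ → Term (.alt x y) ρ
  | seq : ∀ {x y : P A V D} {ρ}, Term x ρ → Term y ρ → Term (.seq x y) ρ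
  | iter : ∀ {x y : P A V D} {ρ}, Term y ρ → Term (.iter x y) ρ
  | par : ∀ {x y : P A V D} {ρ}, Term x ρ → Term y ρ → Term (.par x y) ρ
  | encap : ∀ {x : P A V D} {H ρ}, Term x ρ → Term (.encap H x) ρ
  | gc : ∀ {x : P A V D} {φ : Cond V D} {ρ}, φ ρ → Term x ρ → Term (.gc φ x) ρ
  | eval : ∀ {x : P A V D} {ρ ρ'}, Term x ρ → Term (.eval ρ x) ρ'

/-- the transition relation `t —(ρ,α)→ t′` of the structural operational
semantics of deACPei, relative to the communication function `γ` (with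
`γ a b = none` meaning that the communication of `a` and `b` is `δ`) -/
inductive Step (γ : A → A → Option A) :
    P A V D → Val V D → Atom A V D → P A V D → Prop where
  | atom : ∀ {α : Atom A V D} {ρ}, Step γ (.atom α) ρ α .eps
  | altL : ∀ {x y x' : P A V D} {ρ α}, Step γ x ρ α x' → Step γ (.alt x y) ρ α x'
  | altR : ∀ {x y y' : P A V D} {ρ α}, Step γ y ρ α y' → Step γ (.alt x y) ρ α y'
  | seqL : ∀ {x y x' : P A V D} {ρ α},
      Step γ x ρ α x' → Step γ (.seq x y) ρ α (.seq x' y)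
  | seqR : ∀ {x y y' : P A V D} {ρ α},
      Term x ρ → Step γ y ρ α y' → Step γ (.seq x y) ρ α y'
  | iterExit : ∀ {x y y' : P A V D} {ρ α},
      Step γ y ρ α y' → Step γ (.iter x y) ρ α y'
  | iterLoop : ∀ {x y x' : P A V D} {ρ α},
      Step γ x ρ α x' → Step γ (.iter x y) ρ α (.seq x' (.iter x y))
  | parL : ∀ {x y x' : P A V D} {ρ α},
      Step γ x ρ α x' → Step γ (.par x y) ρ α (.par x' y)
  | parR : ∀ {x y y' : P A V D} {ρ α},
      Step γ y ρ α y' → Step γ (.par x y) ρ α (.par x y')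
  | parC : ∀ {x y x' y' : P A V D} {ρ a b c},
      Step γ x ρ (.basic a) x' → Step γ y ρ (.basic b) y' → γ a b = some c →
      Step γ (.par x y) ρ (.basic c) (.par x' y')
  | parCD : ∀ {x y x' y' : P A V D} {ρ a b c e e' es es'},
      Step γ x ρ (.param a e es) x' → Step γ y ρ (.param b e' es') y' →
      γ a b = some c → e ρ = e' ρ →
      List.Forall₂ (fun (f g : Expr V D) => f ρ = g ρ) es es' →
      Step γ (.par x y) ρ (.param c e es) (.par x' y')
  | lmerge : ∀ {x y x' : P A V D} {ρ α},
      Step γ x ρ α x' → Step γ (.lmerge x y) ρ α (.par x' y)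
  | cmergeC : ∀ {x y x' y' : P A V D} {ρ a b c},
      Step γ x ρ (.basic a) x' → Step γ y ρ (.basic b) y' → γ a b = some c →
      Step γ (.cmerge x y) ρ (.basic c) (.par x' y')
  | cmergeCD : ∀ {x y x' y' : P A V D} {ρ a b c e e' es es'},
      Step γ x ρ (.param a e es) x' → Step γ y ρ (.param b e' es') y' →
      γ a b = some c → e ρ = e' ρ →
      List.Forall₂ (fun (f g : Expr V D) => f ρ = g ρ) es es' →
      Step γ (.cmerge x y) ρ (.param c e es) (.par x' y')
  | encapB : ∀ {x x' : P A V D} {H ρ a},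
      Step γ x ρ (.basic a) x' → a ∉ H →
      Step γ (.encap H x) ρ (.basic a) (.encap H x')
  | encapP : ∀ {x x' : P A V D} {H ρ a e es},
      Step γ x ρ (.param a e es) x' → a ∉ H →
      Step γ (.encap H x) ρ (.param a e es) (.encap H x')
  | encapA : ∀ {x x' : P A V D} {H ρ v e},
      Step γ x ρ (.assign v e) x' →
      Step γ (.encap H x) ρ (.assign v e) (.encap H x')
  | gc : ∀ {x x' : P A V D} {φ : Cond V D} {ρ α},
      φ ρ → Step γ x ρ α x' → Step γ (.gc φ x) ρ α x'
  | evalB : ∀ {x x' : P A V D} {ρ ρ' a},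
      Step γ x ρ (.basic a) x' →
      Step γ (.eval ρ x) ρ' (.basic a) (.eval ρ x')
  | evalP : ∀ {x x' : P A V D} {ρ ρ' a e es},
      Step γ x ρ (.param a e es) x' →
      Step γ (.eval ρ x) ρ'
        (.param a (constE (e ρ)) (es.map fun f => constE (f ρ))) (.eval ρ x')
  | evalA : ∀ {x x' : P A V D} {ρ ρ' v e},
      Step γ x ρ (.assign v e) x' →
      Step γ (.eval ρ x) ρ' (.assign v (constE (e ρ)))
        (.eval (upd ρ v (e ρ)) x')

/-- data equivalence of atomic process terms (`≃`) -/
inductive DataEq : Atom A V D → Atom A V D → Prop where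
  | basic : ∀ {a : A}, DataEq (.basic a) (.basic a)
  | param : ∀ {a : A} {e e' : Expr V D} {es es' : List (Expr V D)},
      (∀ ρ, e ρ = e' ρ) →
      List.Forall₂ (fun (f g : Expr V D) => ∀ ρ, f ρ = g ρ) es es' →
      DataEq (.param a e es) (.param a e' es')
  | assign : ∀ {v : V} {e e' : Expr V D},
      (∀ ρ, e ρ = e' ρ) → DataEq (.assign v e) (.assign v e')

/-- `R` is a bisimulation (with transitions matched up to data equivalence) -/
def IsBisim (γ : A → A → Option A) (R : P A V D → P A V D → Prop) : Prop :=
  ∀ t1 t2, R t1 t2 →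
    (∀ ρ α t1', Step γ t1 ρ α t1' →
        ∃ α' t2', DataEq α α' ∧ Step γ t2 ρ α' t2' ∧ R t1' t2') ∧
    (∀ ρ α t2', Step γ t2 ρ α t2' →
        ∃ α' t1', DataEq α α' ∧ Step γ t1 ρ α' t1' ∧ R t1' t2') ∧
    (∀ ρ, Term t1 ρ ↔ Term t2 ρ)

/-- bisimulation equivalence `t1 ↔ t2` -/
def Bisim (γ : A → A → Option A) (t1 t2 : P A V D) : Prop :=
  ∃ R, IsBisim γ R ∧ R t1 t2

/-- a member of `Act ∪ {δ}` as a process term -/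
def ofOptA : Option A → P A V D
  | some a => .atom (.basic a)
  | none => .delta

/-- a member of `AProcTerm ∪ {δ}` as a process term -/
def ofOptAtom : Option (Atom A V D) → P A V D
  | some α => .atom α
  | none => .delta

/-- the communication function extended to `Act ∪ {δ}` -/
def γe (γ : A → A → Option A) : Option A → Option A → Option A
  | some a, some b => γ a b
  | _, _ => none

/-- the (unconditional) equational axioms of deACPei -/
inductive Ax (γ : A → A → Option A) : P A V D → P A V D → Prop where
  | a1 : ∀ x y : P A V D, Ax γ (.alt x y) (.alt y x)
  | a2 : ∀ x y z : P A V D, Ax γ (.alt (.alt x y) z) (.alt x (.alt y z))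
  | a3 : ∀ x : P A V D, Ax γ (.alt x x) x
  | a4 : ∀ x y z : P A V D, Ax γ (.seq (.alt x y) z) (.alt (.seq x z) (.seq y z))
  | a5 : ∀ x y z : P A V D, Ax γ (.seq (.seq x y) z) (.seq x (.seq y z))
  | a6 : ∀ x : P A V D, Ax γ (.alt x .delta) x
  | a7 : ∀ x : P A V D, Ax γ (.seq .delta x) .delta
  | a8 : ∀ x : P A V D, Ax γ (.seq x .eps) x
  | a9 : ∀ x : P A V D, Ax γ (.seq .eps x) x
  | cm1e : ∀ x y : P A V D,
      Ax γ (.par x y)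
        (.alt (.alt (.alt (.lmerge x y) (.lmerge y x)) (.cmerge x y))
          (.seq (.encap Set.univ x) (.encap Set.univ y)))
  | cm2e : ∀ x : P A V D, Ax γ (.lmerge .eps x) .delta
  | cm3 : ∀ (α : Option (Atom A V D)) (x y : P A V D),
      Ax γ (.lmerge (.seq (ofOptAtom α) x) y) (.seq (ofOptAtom α) (.par x y))
  | cm4 : ∀ x y z : P A V D,
      Ax γ (.lmerge (.alt x y) z) (.alt (.lmerge x z) (.lmerge y z))
  | cm5e : ∀ x : P A V D, Ax γ (.cmerge .eps x) .delta
  | cm6e : ∀ x : P A V D, Ax γ (.cmerge x .eps) .delta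
  | cm7 : ∀ (a b : Option A) (x y : P A V D),
      Ax γ (.cmerge (.seq (ofOptA a) x) (.seq (ofOptA b) y))
        (.seq (ofOptA (γe γ a b)) (.par x y))
  | cm8 : ∀ x y z : P A V D,
      Ax γ (.cmerge (.alt x y) z) (.alt (.cmerge x z) (.cmerge y z))
  | cm9 : ∀ x y z : P A V D,
      Ax γ (.cmerge x (.alt y z)) (.alt (.cmerge x y) (.cmerge x z))
  | d0 : ∀ H : Set A, Ax γ (.encap H .eps) .eps
  | d1 : ∀ {H : Set A} {a : A}, a ∉ H →
      Ax γ (.encap H (.atom (.basic a))) (.atom (.basic a))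
  | d2 : ∀ {H : Set A} {a : A}, a ∈ H →
      Ax γ (.encap H (.atom (.basic a))) .delta
  | d3 : ∀ (H : Set A) (x y : P A V D),
      Ax γ (.encap H (.alt x y)) (.alt (.encap H x) (.encap H y))
  | d4 : ∀ (H : Set A) (x y : P A V D),
      Ax γ (.encap H (.seq x y)) (.seq (.encap H x) (.encap H y))
  | bks1 : ∀ x y : P A V D, Ax γ (.iter x y) (.alt (.seq x (.iter x y)) y)
  | bks5 : ∀ x y : P A V D, Ax γ (.iter (.alt x .eps) y) (.iter x y)
  | gc1 : ∀ x : P A V D, Ax γ (.gc (fun _ => True) x) x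
  | gc2 : ∀ x : P A V D, Ax γ (.gc (fun _ => False) x) .delta
  | gc3 : ∀ φ : Cond V D, Ax γ (.gc φ .delta) .delta
  | gc4 : ∀ (φ : Cond V D) (x y : P A V D),
      Ax γ (.gc φ (.alt x y)) (.alt (.gc φ x) (.gc φ y))
  | gc5 : ∀ (φ : Cond V D) (x y : P A V D),
      Ax γ (.gc φ (.seq x y)) (.seq (.gc φ x) y)
  | gc6 : ∀ (φ ψ : Cond V D) (x : P A V D),
      Ax γ (.gc φ (.gc ψ x)) (.gc (fun ρ => φ ρ ∧ ψ ρ) x)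
  | gc7 : ∀ (φ ψ : Cond V D) (x : P A V D),
      Ax γ (.gc (fun ρ => φ ρ ∨ ψ ρ) x) (.alt (.gc φ x) (.gc ψ x))
  | gc8 : ∀ (φ : Cond V D) (x y : P A V D),
      Ax γ (.lmerge (.gc φ x) y) (.gc φ (.lmerge x y))
  | gc9 : ∀ (φ : Cond V D) (x y : P A V D),
      Ax γ (.cmerge (.gc φ x) y) (.gc φ (.cmerge x y))
  | gc10 : ∀ (φ : Cond V D) (x y : P A V D),
      Ax γ (.cmerge x (.gc φ y)) (.gc φ (.cmerge x y))
  | gc11 : ∀ (H : Set A) (φ : Cond V D) (x : P A V D),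
      Ax γ (.encap H (.gc φ x)) (.gc φ (.encap H x))
  | v0 : ∀ ρ : Val V D, Ax γ (.eval ρ .eps) .eps
  | v1 : ∀ (ρ : Val V D) (α : Option A) (x : P A V D),
      Ax γ (.eval ρ (.seq (ofOptA α) x)) (.seq (ofOptA α) (.eval ρ x))
  | v2 : ∀ (ρ : Val V D) (a : A) (e : Expr V D) (es : List (Expr V D)) (x : P A V D),
      Ax γ (.eval ρ (.seq (.atom (.param a e es)) x))
        (.seq (.atom (.param a (constE (e ρ)) (es.map fun f => constE (f ρ))))
          (.eval ρ x))
  | v3 : ∀ (ρ : Val V D) (v : V) (e : Expr V D) (x : P A V D),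
      Ax γ (.eval ρ (.seq (.atom (.assign v e)) x))
        (.seq (.atom (.assign v (constE (e ρ)))) (.eval (upd ρ v (e ρ)) x))
  | v4 : ∀ (ρ : Val V D) (x y : P A V D),
      Ax γ (.eval ρ (.alt x y)) (.alt (.eval ρ x) (.eval ρ y))
  | v5 : ∀ (ρ : Val V D) (φ : Cond V D) (x : P A V D),
      Ax γ (.eval ρ (.gc φ x)) (.gc (fun _ => φ ρ) (.eval ρ x))
  | cm7da : ∀ {a b c : A} {e e' : Expr V D} {es es' : List (Expr V D)}
      (x y : P A V D), γ a b = some c → es.length = es'.length →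
      Ax γ (.cmerge (.seq (.atom (.param a e es)) x)
              (.seq (.atom (.param b e' es')) y))
        (.gc (fun ρ => e ρ = e' ρ ∧
                List.Forall₂ (fun (f g : Expr V D) => f ρ = g ρ) es es')
          (.seq (.atom (.param c e es)) (.par x y)))
  | cm7db : ∀ {a b : A} {e e' : Expr V D} {es es' : List (Expr V D)}
      (x y : P A V D), (γ a b = none ∨ es.length ≠ es'.length) →
      Ax γ (.cmerge (.seq (.atom (.param a e es)) x)
              (.seq (.atom (.param b e' es')) y)) .delta
  | cm7dc : ∀ {a : A} {e : Expr V D} {es : List (Expr V D)}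
      (α : Option (Atom A V D)) (x y : P A V D),
      (∀ (b : A) (f : Expr V D) (fs : List (Expr V D)), α ≠ some (.param b f fs)) →
      Ax γ (.cmerge (.seq (.atom (.param a e es)) x) (.seq (ofOptAtom α) y)) .delta
  | cm7dd : ∀ {a : A} {e : Expr V D} {es : List (Expr V D)}
      (α : Option (Atom A V D)) (x y : P A V D),
      (∀ (b : A) (f : Expr V D) (fs : List (Expr V D)), α ≠ some (.param b f fs)) →
      Ax γ (.cmerge (.seq (ofOptAtom α) x) (.seq (.atom (.param a e es)) y)) .delta
  | cm7de : ∀ {v : V} {e : Expr V D} (α : Option (Atom A V D)) (x y : P A V D),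
      Ax γ (.cmerge (.seq (.atom (.assign v e)) x) (.seq (ofOptAtom α) y)) .delta
  | cm7df : ∀ {v : V} {e : Expr V D} (α : Option (Atom A V D)) (x y : P A V D),
      Ax γ (.cmerge (.seq (ofOptAtom α) x) (.seq (.atom (.assign v e)) y)) .delta
  | d1da : ∀ {H : Set A} {a : A} {e : Expr V D} {es : List (Expr V D)}, a ∉ H →
      Ax γ (.encap H (.atom (.param a e es))) (.atom (.param a e es))
  | d2d : ∀ {H : Set A} {a : A} {e : Expr V D} {es : List (Expr V D)}, a ∈ H →
      Ax γ (.encap H (.atom (.param a e es))) .delta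
  | d1db : ∀ (H : Set A) (v : V) (e : Expr V D),
      Ax γ (.encap H (.atom (.assign v e))) (.atom (.assign v e))

/-- derivability of an equation between closed process terms from the axioms
of deACPei in conditional equational logic -/
inductive Deriv (γ : A → A → Option A) : P A V D → P A V D → Prop where
  | ax : ∀ {p q : P A V D}, Ax γ p q → Deriv γ p q
  | refl : ∀ p : P A V D, Deriv γ p p
  | symm : ∀ {p q : P A V D}, Deriv γ p q → Deriv γ q p
  | trans : ∀ {p q r : P A V D}, Deriv γ p q → Deriv γ q r → Deriv γ p r
  | altC : ∀ {p q p' q' : P A V D},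
      Deriv γ p q → Deriv γ p' q' → Deriv γ (.alt p p') (.alt q q')
  | seqC : ∀ {p q p' q' : P A V D},
      Deriv γ p q → Deriv γ p' q' → Deriv γ (.seq p p') (.seq q q')
  | iterC : ∀ {p q p' q' : P A V D},
      Deriv γ p q → Deriv γ p' q' → Deriv γ (.iter p p') (.iter q q')
  | parC : ∀ {p q p' q' : P A V D},
      Deriv γ p q → Deriv γ p' q' → Deriv γ (.par p p') (.par q q')
  | lmergeC : ∀ {p q p' q' : P A V D},
      Deriv γ p q → Deriv γ p' q' → Deriv γ (.lmerge p p') (.lmerge q q')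
  | cmergeC : ∀ {p q p' q' : P A V D},
      Deriv γ p q → Deriv γ p' q' → Deriv γ (.cmerge p p') (.cmerge q q')
  | encapC : ∀ {p q : P A V D} (H : Set A),
      Deriv γ p q → Deriv γ (.encap H p) (.encap H q)
  | gcC : ∀ {p q : P A V D} (φ : Cond V D),
      Deriv γ p q → Deriv γ (.gc φ p) (.gc φ q)
  | evalC : ∀ {p q : P A V D} (ρ : Val V D),
      Deriv γ p q → Deriv γ (.eval ρ p) (.eval ρ q)
  | rspE : ∀ {x y z : P A V D},
      Deriv γ (.encap Set.univ x) .delta → Deriv γ z (.alt (.seq x z) y) →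
      Deriv γ z (.iter x y)

/-- derivability of an equation between closed process terms from the axioms
A1 and A2 alone -/
inductive DerivAC : P A V D → P A V D → Prop where
  | a1 : ∀ x y : P A V D, DerivAC (.alt x y) (.alt y x)
  | a2 : ∀ x y z : P A V D, DerivAC (.alt (.alt x y) z) (.alt x (.alt y z))
  | refl : ∀ p : P A V D, DerivAC p p
  | symm : ∀ {p q : P A V D}, DerivAC p q → DerivAC q p
  | trans : ∀ {p q r : P A V D}, DerivAC p q → DerivAC q r → DerivAC p r
  | altC : ∀ {p q p' q' : P A V D},
      DerivAC p q → DerivAC p' q' → DerivAC (.alt p p') (.alt q q')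
  | seqC : ∀ {p q p' q' : P A V D},
      DerivAC p q → DerivAC p' q' → DerivAC (.seq p p') (.seq q q')
  | iterC : ∀ {p q p' q' : P A V D},
      DerivAC p q → DerivAC p' q' → DerivAC (.iter p p') (.iter q q')
  | parC : ∀ {p q p' q' : P A V D},
      DerivAC p q → DerivAC p' q' → DerivAC (.par p p') (.par q q')
  | lmergeC : ∀ {p q p' q' : P A V D},
      DerivAC p q → DerivAC p' q' → DerivAC (.lmerge p p') (.lmerge q q')
  | cmergeC : ∀ {p q p' q' : P A V D},
      DerivAC p q → DerivAC p' q' → DerivAC (.cmerge p p') (.cmerge q q')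
  | encapC : ∀ {p q : P A V D} (H : Set A),
      DerivAC p q → DerivAC (.encap H p) (.encap H q)
  | gcC : ∀ {p q : P A V D} (φ : Cond V D),
      DerivAC p q → DerivAC (.gc φ p) (.gc φ q)
  | evalC : ∀ {p q : P A V D} (ρ : Val V D),
      DerivAC p q → DerivAC (.eval ρ p) (.eval ρ q)

/-- `t` is a summand of `t′` (`t ⊑ t′`) -/
def Summand (t t' : P A V D) : Prop :=
  (∃ t'' : P A V D, DerivAC (.alt t t'') t') ∨ DerivAC t t'

/-- head normal forms of deACPei -/
inductive HNF : P A V D → Prop where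
  | delta : HNF .delta
  | geps : ∀ φ : Cond V D, HNF (.gc φ .eps)
  | gact : ∀ (φ : Cond V D) (α : Atom A V D) (p : P A V D),
      HNF (.gc φ (.seq (.atom α) p))
  | alt : ∀ {p q : P A V D}, HNF p → HNF q → HNF (.alt p q)

/-- the assumptions of deACPei on the communication function: commutativity
and associativity (on `Act ∪ {δ}`) -/
def GammaOK (γ : A → A → Option A) : Prop :=
  (∀ a b, γ a b = γ b a) ∧
  (∀ a b c, (γ a b).bind (fun d => γ d c) = (γ b c).bind (fun d => γ a d))

/-- the terms of `RGProcTerm`: closed process terms in which the evaluation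
operators and the auxiliary operators left merge and communication merge do
not occur -/
def RGTerm : P A V D → Prop
  | .atom _ => True
  | .delta => True
  | .eps => True
  | .alt p q => RGTerm p ∧ RGTerm q
  | .seq p q => RGTerm p ∧ RGTerm q
  | .iter p q => RGTerm p ∧ RGTerm q
  | .par p q => RGTerm p ∧ RGTerm q
  | .lmerge _ _ => False
  | .cmerge _ _ => False
  | .encap _ p => RGTerm p
  | .gc _ p => RGTerm p
  | .eval _ _ => False

/-- the step relation `(p, ρ) —α→ (p′, ρ′)` -/
def RStep (γ : A → A → Option A) (p : P A V D) (ρ : Val V D) (α : Atom A V D)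
    (p' : P A V D) (ρ' : Val V D) : Prop :=
  ∀ ρ'' : Val V D, Step γ (.eval ρ p) ρ'' α (.eval ρ' p')

/-- labels of steps: atomic process terms or the environment label `e` -/
inductive Lab (A V D : Type) : Type where
  | act : Atom A V D → Lab A V D
  | env : Lab A V D

/-- the labelled step relation, including environment steps -/
def StepL (γ : A → A → Option A) (p : P A V D) (ρ : Val V D) (l : Lab A V D)
    (p' : P A V D) (ρ' : Val V D) : Prop :=
  match l with
  | .act α => RStep γ p ρ α p' ρ'
  | .env => p' = p

/-- finite computations: sequences of steps in the step relation -/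
structure Comp (γ : A → A → Option A) : Type where
  n : ℕ
  proc : ℕ → P A V D
  val : ℕ → Val V D
  lab : ℕ → Lab A V D
  step : ∀ i < n, StepL γ (proc i) (val i) (lab i) (proc (i + 1)) (val (i + 1))

/-- `σ` is a computation of `p` -/
def Comp.isOf {γ : A → A → Option A} (σ : Comp (A := A) (V := V) (D := D) γ)
    (p : P A V D) : Prop :=
  σ.proc 0 = p

/-- `σ` satisfies the assumptions `(φ, R)` -/
def asat {γ : A → A → Option A} (σ : Comp (A := A) (V := V) (D := D) γ)
    (φ : Cond V D) (R : Cond2 V D) : Prop :=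
  φ (σ.val 0) ∧
  ∀ i < σ.n, σ.lab i = .env → R (σ.val (i + 1)) (σ.val i)

/-- `σ` satisfies the commitments `(ψ, G)` -/
def csat {γ : A → A → Option A} (σ : Comp (A := A) (V := V) (D := D) γ)
    (ψ : Cond V D) (G : Cond2 V D) : Prop :=
  (σ.proc σ.n = .eps → ψ (σ.val σ.n)) ∧
  ∀ i < σ.n, σ.lab i ≠ .env → G (σ.val (i + 1)) (σ.val i)

/-- truth in the sense of partial correctness of an asserted process with
closed pre-, post-, rely- and guarantee-conditions -/
def PartialTrueC (γ : A → A → Option A) (R G : Cond2 V D) (φ : Cond V D)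
    (p : P A V D) (ψ : Cond V D) : Prop :=
  ∀ σ : Comp (A := A) (V := V) (D := D) γ, σ.isOf p → asat σ φ R → csat σ ψ G

/-- truth in the sense of partial correctness of an asserted process
`⟨R, G⟩ : {φ} p {ψ}`; the conditions may contain rigid (data) variables, whose
valuations are modelled by the parameter `z : Z`, and truth requires truth of
all closed substitution instances, i.e. quantification over all `z` -/
def PartialTrue (γ : A → A → Option A) {Z : Type*} (R G : Z → Cond2 V D)
    (φ : Z → Cond V D) (p : P A V D) (ψ : Z → Cond V D) : Prop :=
  ∀ z : Z, PartialTrueC γ (R z) (G z) (φ z) p (ψ z)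

/-- truth in the sense of partial correctness of a Hoare asserted process
`{φ} p {ψ}` (computations without environment steps) -/
def HoareTrue (γ : A → A → Option A) {Z : Type*} (φ : Z → Cond V D)
    (p : P A V D) (ψ : Z → Cond V D) : Prop :=
  ∀ z : Z, ∀ σ : Comp (A := A) (V := V) (D := D) γ, σ.isOf p →
    (∀ i < σ.n, σ.lab i ≠ Lab.env) →
    φ z (σ.val 0) → σ.proc σ.n = .eps → ψ z (σ.val σ.n)

/-- the flexible variable `v` occurs in the data term `e` -/
def ExprDep (e : Expr V D) (v : V) : Prop := ∃ ρ d, e (upd ρ v d) ≠ e ρ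

/-- the flexible variable `v` occurs in the condition `φ` -/
def CondDep (φ : Cond V D) (v : V) : Prop := ∃ ρ d, ¬ (φ (upd ρ v d) ↔ φ ρ)

/-- the flexible variable constant `v` or `prev v` occurs in the two-state
condition `R` -/
def Cond2Dep (R : Cond2 V D) (v : V) : Prop :=
  ∃ ρc ρp d, ¬ (R (upd ρc v d) ρp ↔ R ρc ρp) ∨ ¬ (R ρc (upd ρp v d) ↔ R ρc ρp)

/-- the set of flexible variables occurring in `φ` -/
def ExprDeps (e : Expr V D) : Set V := {v | ExprDep e v}

def CondDeps (φ : Cond V D) : Set V := {v | CondDep φ v}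

/-- the set `FVar` of flexible variables occurring in a family of one-state
conditions -/
def FVarC {Z : Type*} (φ : Z → Cond V D) : Set V := {v | ∃ z, CondDep (φ z) v}

/-- the set `FVar` of flexible variables occurring in a family of two-state
conditions -/
def FVar2 {Z : Type*} (R : Z → Cond2 V D) : Set V := {v | ∃ z, Cond2Dep (R z) v}

/-- `𝔇 ⊨ prev φ ∧ R ⟹ φ`: satisfaction of `φ` is preserved by steps
satisfying `R` -/
def Preserves {Z : Type*} (R : Z → Cond2 V D) (φ : Z → Cond V D) : Prop :=
  ∀ z ρc ρp, φ z ρp → R z ρc ρp → φ z ρc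

/-- the flexible variables from `A'` occur in the atomic process term only as
allowed for auxiliary variables -/
def AtomOK (A' : Set V) : Atom A V D → Prop
  | .basic _ => True
  | .param _ e es =>
      ExprDeps e ∩ A' = ∅ ∧ ∀ f ∈ es, ExprDeps f ∩ A' = ∅
  | .assign v e => v ∈ A' ∨ (v ∉ A' ∧ ExprDeps e ∩ A' = ∅)

/-- the flexible variables from `A'` occur in `p` only in subterms of the form
`v := e` with `v ∈ A'` -/
def NoAuxViolation (A' : Set V) : P A V D → Prop
  | .atom α => AtomOK A' α
  | .delta => True
  | .eps => True
  | .alt p q => NoAuxViolation A' p ∧ NoAuxViolation A' q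
  | .seq p q => NoAuxViolation A' p ∧ NoAuxViolation A' q
  | .iter p q => NoAuxViolation A' p ∧ NoAuxViolation A' q
  | .par p q => NoAuxViolation A' p ∧ NoAuxViolation A' q
  | .lmerge p q => NoAuxViolation A' p ∧ NoAuxViolation A' q
  | .cmerge p q => NoAuxViolation A' p ∧ NoAuxViolation A' q
  | .encap _ p => NoAuxViolation A' p
  | .gc φ p => CondDeps φ ∩ A' = ∅ ∧ NoAuxViolation A' p
  | .eval _ p => NoAuxViolation A' p

/-- the flexible variable `v` occurs in the process term `p` -/
def OccursIn (v : V) : P A V D → Prop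
  | .atom (.basic _) => False
  | .atom (.param _ e es) => ExprDep e v ∨ ∃ f ∈ es, ExprDep f v
  | .atom (.assign w e) => w = v ∨ ExprDep e v
  | .delta => False
  | .eps => False
  | .alt p q => OccursIn v p ∨ OccursIn v q
  | .seq p q => OccursIn v p ∨ OccursIn v q
  | .iter p q => OccursIn v p ∨ OccursIn v q
  | .par p q => OccursIn v p ∨ OccursIn v q
  | .lmerge p q => OccursIn v p ∨ OccursIn v q
  | .cmerge p q => OccursIn v p ∨ OccursIn v q
  | .encap _ p => OccursIn v p
  | .gc φ p => CondDep φ v ∨ OccursIn v p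
  | .eval _ p => OccursIn v p

/-- `A'` is a set of auxiliary variables of `p` (`A' ∈ AVars(p)`) -/
def AuxSet (A' : Set V) (p : P A V D) : Prop :=
  (∀ v ∈ A', OccursIn v p) ∧ NoAuxViolation A' p

/-- `p_{A'}`: `p` with all occurrences of subterms of the form `v := e` with
`v ∈ A'` replaced by `ε` -/
noncomputable def eraseAux (A' : Set V) : P A V D → P A V D
  | .atom (.assign v e) => if v ∈ A' then .eps else .atom (.assign v e)
  | .atom α => .atom α
  | .delta => .delta
  | .eps => .eps
  | .alt p q => .alt (eraseAux A' p) (eraseAux A' q)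
  | .seq p q => .seq (eraseAux A' p) (eraseAux A' q)
  | .iter p q => .iter (eraseAux A' p) (eraseAux A' q)
  | .par p q => .par (eraseAux A' p) (eraseAux A' q)
  | .lmerge p q => .lmerge (eraseAux A' p) (eraseAux A' q)
  | .cmerge p q => .cmerge (eraseAux A' p) (eraseAux A' q)
  | .encap H p => .encap H (eraseAux A' p)
  | .gc φ p => .gc φ (eraseAux A' p)
  | .eval ρ p => .eval ρ (eraseAux A' p)

/-- the axioms and rules of the rely/guarantee logic RG; the judgment
`RG γ Z R G φ p ψ` formalizes derivability of the asserted process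
`⟨R, G⟩ : {φ} p {ψ}`, where the conditions may contain rigid (data) variables
valued in `Z` -/
inductive RG (γ : A → A → Option A) (Z : Type) :
    (Z → Cond2 V D) → (Z → Cond2 V D) → (Z → Cond V D) → P A V D →
      (Z → Cond V D) → Prop where
  | inaction : ∀ {R G : Z → Cond2 V D} {φ ψ : Z → Cond V D},
      RG γ Z R G φ .delta ψ
  | empty : ∀ {R G : Z → Cond2 V D} {φ : Z → Cond V D},
      Preserves R φ → RG γ Z R G φ .eps φ
  | nonAssign : ∀ {R G : Z → Cond2 V D} {φ : Z → Cond V D} (α : Atom A V D),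
      ¬ α.isAssign →
      Preserves R φ →
      (∀ z ρc ρp, φ z ρp → (∀ v ∈ FVarC φ ∪ FVar2 G, ρc v = ρp v) →
        G z ρc ρp) →
      RG γ Z R G φ (.atom α) φ
  | assign : ∀ {R G : Z → Cond2 V D} {φ ψ : Z → Cond V D} (v : V) (e : Expr V D),
      (∀ z ρ, φ z ρ → ψ z (upd ρ v (e ρ))) →
      Preserves R φ → Preserves R ψ →
      (∀ z ρc ρp, φ z ρp → (ρc v = e ρp ∨ ρc v = ρp v) →
        (∀ w ∈ (FVarC φ ∪ FVar2 G) \ {v}, ρc w = ρp w) → G z ρc ρp) →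
      RG γ Z R G φ (.atom (.assign v e)) ψ
  | altI : ∀ {R G : Z → Cond2 V D} {φ ψ : Z → Cond V D} {p q : P A V D},
      RG γ Z R G φ p ψ → RG γ Z R G φ q ψ → RG γ Z R G φ (.alt p q) ψ
  | seqI : ∀ {R G : Z → Cond2 V D} {φ χ ψ : Z → Cond V D} {p q : P A V D},
      RG γ Z R G φ p χ → RG γ Z R G χ q ψ → RG γ Z R G φ (.seq p q) ψ
  | iterI : ∀ {R G : Z → Cond2 V D} {φ ψ : Z → Cond V D} {p q : P A V D},
      RG γ Z R G φ p φ → RG γ Z R G φ q ψ → RG γ Z R G φ (.iter p q) ψ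
  | gcI : ∀ {R G : Z → Cond2 V D} {φ ψ : Z → Cond V D} {p : P A V D}
      (χ : Cond V D),
      Preserves R φ →
      RG γ Z R G (fun z ρ => φ z ρ ∧ χ ρ) p ψ →
      RG γ Z R G φ (.gc χ p) ψ
  | parI : ∀ {R G' G'' : Z → Cond2 V D} {φ ψ' ψ'' : Z → Cond V D}
      {p q : P A V D},
      RG γ Z (fun z ρc ρp => R z ρc ρp ∨ G'' z ρc ρp) G' φ p ψ' →
      RG γ Z (fun z ρc ρp => R z ρc ρp ∨ G' z ρc ρp) G'' φ q ψ'' →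
      RG γ Z R (fun z ρc ρp => G' z ρc ρp ∨ G'' z ρc ρp) φ (.par p q)
        (fun z ρ => ψ' z ρ ∧ ψ'' z ρ)
  | encapI : ∀ {R G : Z → Cond2 V D} {φ ψ : Z → Cond V D} {p : P A V D}
      (H : Set A),
      RG γ Z R G φ p ψ → RG γ Z R G φ (.encap H p) ψ
  | auxI : ∀ {R R' G : Z → Cond2 V D} {φ φ' ψ : Z → Cond V D} {p : P A V D}
      (A' : Set V),
      Preserves R φ →
      (∀ (z : Z) (ρ : Val V D), ∃ ρ' : Val V D, (∀ v ∉ A', ρ' v = ρ v) ∧ φ' z ρ') →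
      (∀ (z : Z) (ρc ρp : Val V D), ∃ ρc' : Val V D, (∀ v ∉ A', ρc' v = ρc v) ∧ R' z ρc' ρp) →
      RG γ Z (fun z ρc ρp => R z ρc ρp ∧ R' z ρc ρp) G
        (fun z ρ => φ z ρ ∧ φ' z ρ) p ψ →
      AuxSet A' p →
      (FVarC φ ∪ FVarC ψ ∪ FVar2 R ∪ FVar2 G) ∩ A' = ∅ →
      RG γ Z R G φ (eraseAux A' p) ψ
  | conseq : ∀ {R R' G G' : Z → Cond2 V D} {φ φ' ψ ψ' : Z → Cond V D}
      {p : P A V D},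
      (∀ z ρ, φ z ρ → φ' z ρ) →
      (∀ z ρc ρp, R z ρc ρp → R' z ρc ρp) →
      (∀ z ρc ρp, G' z ρc ρp → G z ρc ρp) →
      (∀ z ρ, ψ' z ρ → ψ z ρ) →
      RG γ Z R' G' φ' p ψ' →
      RG γ Z R G φ p ψ

/-- computations `σ` of `p′ ∥ p″`, `σ′` of `p′` and `σ″` of `p″` conjoin
(`σ ∝ σ′ ∥ σ″`) -/
def Conjoin (γ : A → A → Option A)
    (σ σ' σ'' : Comp (A := A) (V := V) (D := D) γ) : Prop :=
  σ.n = σ'.n ∧ σ.n = σ''.n ∧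
  (∀ i ≤ σ.n, σ.proc i = .par (σ'.proc i) (σ''.proc i)) ∧
  (∀ i ≤ σ.n, σ.val i = σ'.val i ∧ σ.val i = σ''.val i) ∧
  ∀ i < σ.n,
    (σ'.lab i ≠ .env ∧ σ''.lab i = .env ∧ σ.lab i = σ'.lab i) ∨
    (σ'.lab i = .env ∧ σ''.lab i ≠ .env ∧ σ.lab i = σ''.lab i) ∨
    (σ'.lab i = .env ∧ σ''.lab i = .env ∧ σ.lab i = .env) ∨
    (∃ α' α'' β : Atom A V D, σ'.lab i = .act α' ∧ σ''.lab i = .act α'' ∧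
      σ.lab i = .act β ∧
      Deriv γ (.cmerge (.atom α') (.atom α'')) (.atom β))

/-- the atomic process term `α` occurs in the process term `p` -/
def OccursAtom (α : Atom A V D) : P A V D → Prop
  | .atom β => β = α
  | .delta => False
  | .eps => False
  | .alt p q => OccursAtom α p ∨ OccursAtom α q
  | .seq p q => OccursAtom α p ∨ OccursAtom α q
  | .iter p q => OccursAtom α p ∨ OccursAtom α q
  | .par p q => OccursAtom α p ∨ OccursAtom α q
  | .lmerge p q => OccursAtom α p ∨ OccursAtom α q
  | .cmerge p q => OccursAtom α p ∨ OccursAtom α q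
  | .encap _ p => OccursAtom α p
  | .gc _ p => OccursAtom α p
  | .eval _ p => OccursAtom α p

/-- possibly infinite computations -/
structure CompW (γ : A → A → Option A) : Type where
  len : ℕ∞
  proc : ℕ → P A V D
  val : ℕ → Val V D
  lab : ℕ → Lab A V D
  step : ∀ i : ℕ, (i : ℕ∞) < len →
    StepL γ (proc i) (val i) (lab i) (proc (i + 1)) (val (i + 1))

def CompW.isOf {γ : A → A → Option A} (σ : CompW (A := A) (V := V) (D := D) γ)
    (p : P A V D) : Prop :=
  σ.proc 0 = p

/-- `σ` satisfies the assumptions `(φ, R)` -/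
def asatW {γ : A → A → Option A} (σ : CompW (A := A) (V := V) (D := D) γ)
    (φ : Cond V D) (R : Cond2 V D) : Prop :=
  φ (σ.val 0) ∧
  ∀ i : ℕ, (i : ℕ∞) < σ.len → σ.lab i = .env → R (σ.val (i + 1)) (σ.val i)

/-- `σ` satisfies the commitments `(ψ, G)` -/
def csatW {γ : A → A → Option A} (σ : CompW (A := A) (V := V) (D := D) γ)
    (ψ : Cond V D) (G : Cond2 V D) : Prop :=
  (∀ n : ℕ, σ.len = (n : ℕ∞) → σ.proc n = .eps → ψ (σ.val n)) ∧
  ∀ i : ℕ, (i : ℕ∞) < σ.len → σ.lab i ≠ .env → G (σ.val (i + 1)) (σ.val i)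

/-- `σ` is convergent: it contains only finitely many non-environment steps -/
def Conv {γ : A → A → Option A}
    (σ : CompW (A := A) (V := V) (D := D) γ) : Prop :=
  {i : ℕ | (i : ℕ∞) < σ.len ∧ σ.lab i ≠ .env}.Finite

/-- a finite `σ` satisfies the enabledness-condition `θ` -/
def esat {γ : A → A → Option A} (σ : CompW (A := A) (V := V) (D := D) γ)
    (θ : Cond V D) : Prop :=
  ∀ n : ℕ, σ.len = (n : ℕ∞) → θ (σ.val n) →
    σ.proc n = .eps ∨
    ∃ (α : Atom A V D) (p' : P A V D) (ρ' : Val V D),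
      RStep γ (σ.proc n) (σ.val n) α p' ρ'

/-- the carrier of sort `Ord` of the data algebra: all ordinals `α` such that
`ω` is not smaller than `α` -/
abbrev OrdD : Type 1 := {o : Ordinal // o ≤ Ordinal.omega0}

/-- the axioms and rules of the rely/guarantee logic RG adapted to deadlock
freedom; the judgment `RGE γ Z R θ G φ p ψ` formalizes derivability of the
asserted process with enabledness-condition `⟨R, θ, G⟩ : {φ} p {ψ}` -/
inductive RGE (γ : A → A → Option A) : ∀ Z : Type 1,
    (Z → Cond2 V D) → (Z → Cond V D) → (Z → Cond2 V D) → (Z → Cond V D) →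
      P A V D → (Z → Cond V D) → Prop where
  | inaction : ∀ {Z : Type 1} {R G : Z → Cond2 V D} {φ ψ : Z → Cond V D},
      RGE γ Z R (fun _ _ => False) G φ .delta ψ
  | empty : ∀ {Z : Type 1} {R G : Z → Cond2 V D} {θ φ : Z → Cond V D},
      Preserves R φ → RGE γ Z R θ G φ .eps φ
  | nonAssign : ∀ {Z : Type 1} {R G : Z → Cond2 V D} {θ φ : Z → Cond V D}
      (α : Atom A V D),
      ¬ α.isAssign →
      Preserves R φ →
      (∀ z ρc ρp, φ z ρp → (∀ v ∈ FVarC φ ∪ FVar2 G, ρc v = ρp v) →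
        G z ρc ρp) →
      RGE γ Z R θ G φ (.atom α) φ
  | assign : ∀ {Z : Type 1} {R G : Z → Cond2 V D} {θ φ ψ : Z → Cond V D}
      (v : V) (e : Expr V D),
      (∀ z ρ, φ z ρ → ψ z (upd ρ v (e ρ))) →
      Preserves R φ → Preserves R ψ →
      (∀ z ρc ρp, φ z ρp → (ρc v = e ρp ∨ ρc v = ρp v) →
        (∀ w ∈ (FVarC φ ∪ FVar2 G) \ {v}, ρc w = ρp w) → G z ρc ρp) →
      RGE γ Z R θ G φ (.atom (.assign v e)) ψ
  | altI : ∀ {Z : Type 1} {R G : Z → Cond2 V D} {θ' θ'' φ ψ : Z → Cond V D}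
      {p q : P A V D},
      RGE γ Z R θ' G φ p ψ → RGE γ Z R θ'' G φ q ψ →
      RGE γ Z R (fun z ρ => θ' z ρ ∨ θ'' z ρ) G φ (.alt p q) ψ
  | seqI : ∀ {Z : Type 1} {R G : Z → Cond2 V D} {θ φ χ ψ : Z → Cond V D}
      {p q : P A V D},
      RGE γ Z R θ G φ p χ → RGE γ Z R θ G χ q ψ → RGE γ Z R θ G φ (.seq p q) ψ
  | iterI : ∀ {Z : Type 1} {R G : Z → Cond2 V D} {θ' θ'' ψ : Z → Cond V D}
      {p q : P A V D} (φ : Z → OrdD → Cond V D),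
      (∀ z (a : OrdD) ρc ρp, φ z a ρp → R z ρc ρp →
        ∃ a' : OrdD, a' ≤ a ∧ φ z a' ρc) →
      RGE γ (Z × OrdD) (fun w => R w.1) (fun w => θ' w.1) (fun w => G w.1)
        (fun w ρ => φ w.1 w.2 ρ ∧ 0 < w.2.val) p
        (fun w ρ => ∃ a' : OrdD, a' < w.2 ∧ φ w.1 a' ρ) →
      RGE γ Z R θ'' G (fun z ρ => φ z ⟨0, zero_le⟩ ρ) q ψ →
      RGE γ Z R (fun z ρ => θ' z ρ ∨ θ'' z ρ) G
        (fun z ρ => ∃ a : OrdD, φ z a ρ) (.iter p q) ψ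
  | gcI : ∀ {Z : Type 1} {R G : Z → Cond2 V D} {φ ψ : Z → Cond V D}
      {p : P A V D} (χ : Cond V D),
      Preserves R φ →
      RGE γ Z R (fun _ _ => True) G (fun z ρ => φ z ρ ∧ χ ρ) p ψ →
      RGE γ Z R (fun z ρ => φ z ρ → χ ρ) G φ (.gc χ p) ψ
  | parI : ∀ {Z : Type 1} {R G' G'' : Z → Cond2 V D}
      {θ θ' θ'' φ ψ' ψ'' : Z → Cond V D} {p q : P A V D},
      (∀ z ρ, ψ'' z ρ → θ' z ρ) →
      (∀ z ρ, ψ' z ρ → θ'' z ρ) →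
      (∀ z ρ, θ' z ρ ∨ θ'' z ρ) →
      RGE γ Z (fun z ρc ρp => R z ρc ρp ∨ G'' z ρc ρp)
        (fun z ρ => θ z ρ ∧ θ' z ρ) G' φ p ψ' →
      RGE γ Z (fun z ρc ρp => R z ρc ρp ∨ G' z ρc ρp)
        (fun z ρ => θ z ρ ∧ θ'' z ρ) G'' φ q ψ'' →
      RGE γ Z R θ (fun z ρc ρp => G' z ρc ρp ∨ G'' z ρc ρp) φ (.par p q)
        (fun z ρ => ψ' z ρ ∧ ψ'' z ρ)
  | encapI : ∀ {Z : Type 1} {R G : Z → Cond2 V D} {θ φ ψ : Z → Cond V D}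
      {p : P A V D} (H : Set A),
      RGE γ Z R θ G φ p ψ →
      (∀ a ∈ H, ¬ OccursAtom (.basic a) p) →
      RGE γ Z R θ G φ (.encap H p) ψ
  | auxI : ∀ {Z : Type 1} {R R' G : Z → Cond2 V D}
      {θ θ' φ φ' ψ : Z → Cond V D} {p : P A V D} (A' : Set V),
      Preserves R φ →
      (∀ (z : Z) (ρ : Val V D), ∃ ρ' : Val V D, (∀ v ∉ A', ρ' v = ρ v) ∧ φ' z ρ') →
      (∀ (z : Z) (ρc ρp : Val V D), ∃ ρc' : Val V D, (∀ v ∉ A', ρc' v = ρc v) ∧ R' z ρc' ρp) →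
      (∀ (z : Z) (ρ : Val V D), ∃ ρ' : Val V D, (∀ v ∉ A', ρ' v = ρ v) ∧ θ' z ρ') →
      RGE γ Z (fun z ρc ρp => R z ρc ρp ∧ R' z ρc ρp)
        (fun z ρ => θ z ρ ∧ θ' z ρ) G (fun z ρ => φ z ρ ∧ φ' z ρ) p ψ →
      AuxSet A' p →
      (FVarC φ ∪ FVarC ψ ∪ FVarC θ ∪ FVar2 R ∪ FVar2 G) ∩ A' = ∅ →
      RGE γ Z R θ G φ (eraseAux A' p) ψ
  | conseq : ∀ {Z : Type 1} {R R' G G' : Z → Cond2 V D}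
      {θ θ' φ φ' ψ ψ' : Z → Cond V D} {p : P A V D},
      (∀ z ρ, φ z ρ → φ' z ρ) →
      (∀ z ρc ρp, R z ρc ρp → R' z ρc ρp) →
      (∀ z ρ, θ z ρ → θ' z ρ) →
      (∀ z ρc ρp, G' z ρc ρp → G z ρc ρp) →
      (∀ z ρ, ψ' z ρ → ψ z ρ) →
      RGE γ Z R' θ' G' φ' p ψ' →
      RGE γ Z R θ G φ p ψ

/-- truth in the sense of weak total correctness of an asserted process with
enabledness-condition `⟨R, θ, G⟩ : {φ} p {ψ}` -/
def WTTrueE (γ : A → A → Option A) {Z : Type*} (R : Z → Cond2 V D)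
    (θ : Z → Cond V D) (G : Z → Cond2 V D) (φ : Z → Cond V D) (p : P A V D)
    (ψ : Z → Cond V D) : Prop :=
  ∀ z : Z, ∀ σ : CompW (A := A) (V := V) (D := D) γ, σ.isOf p →
    asatW σ (φ z) (R z) →
    Conv σ ∧ esat σ (θ z) ∧ csatW σ (ψ z) (G z)

end DeACPei
namespace DeACPei

section PartialCorrectness

variable {A V D : Type} {γ : A → A → Option A} (σ : Comp (A := A) (V := V) (D := D) γ)

theorem asat_false_iff (φ : Cond V D) :
    asat σ φ (fun _ _ => False) ↔ φ (σ.val 0) ∧ ∀ i < σ.n, σ.lab i ≠ .env := by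
  simp only [asat, imp_false]

theorem csat_true_iff (ψ : Cond V D) :
    csat σ ψ (fun _ _ => True) ↔ (σ.proc σ.n = .eps → ψ (σ.val σ.n)) := by
  simp only [csat, implies_true, and_true]

theorem partialTrueC_false_true_iff (φ ψ : Cond V D) (p : P A V D) :
    PartialTrueC γ (fun _ _ => False) (fun _ _ => True) φ p ψ ↔
      ∀ σ : Comp (A := A) (V := V) (D := D) γ, σ.isOf p →
        (∀ i < σ.n, σ.lab i ≠ .env) → φ (σ.val 0) → σ.proc σ.n = .eps → ψ (σ.val σ.n) := by
  simp only [PartialTrueC, asat_false_iff, csat_true_iff, and_imp]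
  exact forall_congr' fun _ => forall_congr' fun _ => forall_comm

end PartialCorrectness

theorem hoare_iff_rg_general {A V D : Type}
    (γ : A → A → Option A) :
    ∀ (Z : Type) (φ ψ : Z → Cond V D) (p : P A V D), RGTerm p →
      (HoareTrue γ φ p ψ ↔
        PartialTrue γ (fun _ _ _ => False) (fun _ _ _ => True) φ p ψ) := fun _ φ ψ p _ =>
  forall_congr' fun z => (partialTrueC_false_true_iff (φ z) (ψ z) p).symm

/-- for every asserted process `{φ} p {ψ}` of the Hoare logic
for deACPei: `{φ} p {ψ}` is true in the sense of partial correctness if and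
only if the rely/guarantee asserted process `⟨False, True⟩ : {φ} p {ψ}` is
true in the sense of partial correctness. -/
theorem hoare_iff_rg {A V D : Type} [Finite A] [Countable V] [Nonempty D]
    (γ : A → A → Option A) (hγ : GammaOK γ) :
    ∀ (Z : Type) (φ ψ : Z → Cond V D) (p : P A V D), RGTerm p →
      (HoareTrue γ φ p ψ ↔
        PartialTrue γ (fun _ _ _ => False) (fun _ _ _ => True) φ p ψ) :=
  hoare_iff_rg_general γ

end DeACPei
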